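/- Suppose each f_i is convex and L_i-smooth, F is L_F-smooth and μ-strongly convex with μ > 0, and x* is the minimizer of F. Let ρ ∈ (0,1], 0 < η ≤ 1/(6L̄ + L_F), α₁ = max{1 − ημ, 1 − ρ/2}, and β = 4η²L̄/ρ. For any probability vector p with positive entries and x, w ∈ ℝ^d, with g_i = (1/(n p_i))(∇f_i(x) − ∇f_i(w)) + ∇F(w), the one-step AS-LSVRG contraction holds: ∑_{i=1}^n p_i ‖x − ηg_i − x*‖² + β(ρ·D(x) + (1 − ρ)·D(w)) ≤ α₁(‖x − x*‖² + β·D(w)) + η²(V_e(p; x, w) − V_e(p^IS; x, w)). -/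

import Mathlib

/-!
Write `q = x - x*` and `T = F x - F x*`. Under `p` the estimator `g` is unbiased, `∑ pᵢ gᵢ = ∇F x`,
with second moment `V_e(p) + ‖∇F x‖² - ‖∇F x - ∇F w‖²`, so the expected squared distance is
`‖q‖² - 2η⟪∇F x, q⟫ + η² (V_e(p) + ‖∇F x‖² - ‖∇F x - ∇F w‖²)`. Strong convexity gives
`2T + μ‖q‖² ≤ 2⟪∇F x, q⟫`; co-coercivity of `F` and of every `fᵢ` (from the descent lemma) gives
`‖∇F x‖² ≤ 2 L_F T` and `D(x) ≤ 2T`; and `V_e(p^IS) = L̄ · (1/n) ∑ ‖∇fᵢ x - ∇fᵢ w‖² / Lᵢ` is at most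
`2 L̄ (D(x) + D(w))`. Since `βρ = 4η²L̄`, every term in `T` collects into
`-2ηT (1 - η (6 L̄ + L_F)) ≤ 0`, and what remains is absorbed by `α₁`.
-/

open MeasureTheory Finset
open scoped RealInnerProductSpace BigOperators

abbrev Euc (d : ℕ) := EuclideanSpace ℝ (Fin d)

/-- The finite-sum objective `F(x) = (1/n) ∑ f i x`. -/
noncomputable def avgF {d : ℕ} (n : ℕ) (f : Fin n → Euc d → ℝ) (x : Euc d) : ℝ :=
  (1 / (n : ℝ)) * ∑ i, f i x

/-- The gradient of the finite-sum objective, `∇F(x) = (1/n) ∑ ∇f i x`. -/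
noncomputable def avgG {d : ℕ} (n : ℕ) (f' : Fin n → Euc d → Euc d) (x : Euc d) : Euc d :=
  (1 / (n : ℝ)) • ∑ i, f' i x

/-- The effective sampling variance `V_e(q; x, w)`. -/
noncomputable def Ve {d : ℕ} (n : ℕ) (f' : Fin n → Euc d → Euc d)
    (q : Fin n → ℝ) (x w : Euc d) : ℝ :=
  (1 / (n : ℝ) ^ 2) * ∑ i, (1 / q i) * ‖f' i x - f' i w‖ ^ 2

/-- The average smoothness constant `L̄ = (1/n) ∑ L i`. -/
noncomputable def Lbar (n : ℕ) (L : Fin n → ℝ) : ℝ := (1 / (n : ℝ)) * ∑ i, L i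

/-- The importance sampling distribution `p^IS_i = L i / (n L̄)`. -/
noncomputable def pIS (n : ℕ) (L : Fin n → ℝ) (i : Fin n) : ℝ :=
  L i / ((n : ℝ) * Lbar n L)

/-- `D(w) = (1/n) ∑ (1 / L i) ‖∇f i w - ∇f i x*‖²`. -/
noncomputable def Dfun {d : ℕ} (n : ℕ) (f' : Fin n → Euc d → Euc d) (L : Fin n → ℝ)
    (xstar w : Euc d) : ℝ :=
  (1 / (n : ℝ)) * ∑ i, (1 / L i) * ‖f' i w - f' i xstar‖ ^ 2

section GradientInequalities

variable {E : Type*} [NormedAddCommGroup E] [InnerProductSpace ℝ E] [CompleteSpace E]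
  {h : E → ℝ} {h' : E → E} {K μ : ℝ}

theorem hasDerivAt_comp_add_smul (hg : ∀ z, HasGradientAt h (h' z) z) (x u : E) (t : ℝ) :
    HasDerivAt (fun s : ℝ => h (x + s • u)) ⟪h' (x + t • u), u⟫ t := by
  have hline : HasDerivAt (fun s : ℝ => x + s • u) u t := by
    simpa using ((hasDerivAt_id t).smul_const u).const_add x
  simpa [Function.comp_def] using (hg (x + t • u)).hasFDerivAt.comp_hasDerivAt t hline

theorem le_add_inner_add_of_lipschitz_gradient (hg : ∀ z, HasGradientAt h (h' z) z)
    (hl : ∀ a b, ‖h' a - h' b‖ ≤ K * ‖a - b‖) (x y : E) :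
    h y ≤ h x + ⟪h' x, y - x⟫ + K / 2 * ‖y - x‖ ^ 2 := by
  set u := y - x
  let ψ : ℝ → ℝ := fun t => h (x + t • u) - t * ⟪h' x, u⟫ - K * ‖u‖ ^ 2 / 2 * t ^ 2
  have hψ : ∀ t, HasDerivAt ψ (⟪h' (x + t • u) - h' x, u⟫ - K * ‖u‖ ^ 2 * t) t := by
    intro t
    refine (((hasDerivAt_comp_add_smul hg x u t).sub
      ((hasDerivAt_id t).mul_const ⟪h' x, u⟫)).sub
      ((hasDerivAt_pow 2 t).const_mul (K * ‖u‖ ^ 2 / 2))).congr_deriv ?_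
    rw [inner_sub_left]
    ring
  have hslope : ∀ t ∈ Set.Icc (0 : ℝ) 1, ⟪h' (x + t • u) - h' x, u⟫ ≤ K * ‖u‖ ^ 2 * t := by
    intro t ht
    calc _ ≤ ‖h' (x + t • u) - h' x‖ * ‖u‖ := real_inner_le_norm _ _
      _ ≤ K * ‖x + t • u - x‖ * ‖u‖ := by gcongr; exact hl _ _
      _ = K * ‖u‖ ^ 2 * t := by
        rw [add_sub_cancel_left, norm_smul, Real.norm_of_nonneg ht.1]; ring
  have hanti : AntitoneOn ψ (Set.Icc 0 1) :=
    antitoneOn_of_hasDerivWithinAt_nonpos (convex_Icc 0 1)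
      (fun t _ => (hψ t).continuousAt.continuousWithinAt) (fun t _ => (hψ t).hasDerivWithinAt)
      (fun t ht => by linarith [hslope t (interior_subset ht)])
  have h01 := hanti (Set.left_mem_Icc.2 zero_le_one) (Set.right_mem_Icc.2 zero_le_one) zero_le_one
  simp only [ψ, u, zero_smul, add_zero, one_smul, add_sub_cancel] at h01
  linarith

theorem sq_norm_sub_le_of_convex_of_lipschitz_gradient (hK : 0 < K)
    (hg : ∀ z, HasGradientAt h (h' z) z) (hconv : ∀ a b, h a + ⟪h' a, b - a⟫ ≤ h b)
    (hl : ∀ a b, ‖h' a - h' b‖ ≤ K * ‖a - b‖) (x y : E) :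
    ‖h' y - h' x‖ ^ 2 ≤ 2 * K * (h y - h x - ⟪h' x, y - x⟫) := by
  set v := h' y - h' x
  -- compare the convexity lower bound at `x` with the descent upper bound at `y` at `y - K⁻¹ • v`
  have hlow := hconv x (y - K⁻¹ • v)
  have hup := le_add_inner_add_of_lipschitz_gradient hg hl y (y - K⁻¹ • v)
  have hv : ⟪h' y, v⟫ - ⟪h' x, v⟫ = ‖v‖ ^ 2 := by
    rw [← inner_sub_left, real_inner_self_eq_norm_sq]
  rw [sub_right_comm, inner_sub_right, real_inner_smul_right] at hlow
  rw [sub_sub_cancel_left, inner_neg_right, real_inner_smul_right, norm_neg, norm_smul,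
    Real.norm_of_nonneg (inv_nonneg.2 hK.le)] at hup
  have hquad : K / 2 * (K⁻¹ * ‖v‖) ^ 2 = K⁻¹ * ‖v‖ ^ 2 / 2 := by
    field_simp
  have hv' : K⁻¹ * ⟪h' y, v⟫ - K⁻¹ * ⟪h' x, v⟫ = K⁻¹ * ‖v‖ ^ 2 := by rw [← mul_sub, hv]
  have key : K⁻¹ * ‖v‖ ^ 2 / 2 ≤ h y - h x - ⟪h' x, y - x⟫ := by linarith
  calc ‖v‖ ^ 2 = 2 * K * (K⁻¹ * ‖v‖ ^ 2 / 2) := by field_simp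
    _ ≤ _ := by gcongr

theorem sq_norm_sub_le_of_strongConvex_of_lipschitz_gradient (hμ : 0 < μ)
    (hg : ∀ z, HasGradientAt h (h' z) z)
    (hsc : ∀ a b, h a + ⟪h' a, b - a⟫ + μ / 2 * ‖b - a‖ ^ 2 ≤ h b)
    (hl : ∀ a b, ‖h' a - h' b‖ ≤ K * ‖a - b‖) (x y : E) :
    ‖h' y - h' x‖ ^ 2 ≤ 2 * K * (h y - h x - ⟪h' x, y - x⟫) := by
  rcases eq_or_ne y x with rfl | hxy
  · simp
  -- strong monotonicity and the Lipschitz bound force `μ ≤ K`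
  have hK : 0 < K := by
    have hmono : μ * ‖y - x‖ ^ 2 ≤ ⟪h' y - h' x, y - x⟫ := by
      have h1 := hsc x y
      have h2 := hsc y x
      rw [← neg_sub y x, inner_neg_right, norm_neg] at h2
      rw [inner_sub_left]
      linarith
    have hlip : ⟪h' y - h' x, y - x⟫ ≤ K * ‖y - x‖ ^ 2 := by
      calc _ ≤ ‖h' y - h' x‖ * ‖y - x‖ := real_inner_le_norm _ _
        _ ≤ K * ‖y - x‖ * ‖y - x‖ := by gcongr; exact hl _ _
        _ = K * ‖y - x‖ ^ 2 := by ring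
    have hpos : 0 < ‖y - x‖ ^ 2 := by positivity [sub_ne_zero.2 hxy]
    nlinarith
  refine sq_norm_sub_le_of_convex_of_lipschitz_gradient hK hg (fun a b => ?_) hl x y
  linarith [hsc a b, mul_nonneg (half_pos hμ).le (sq_nonneg ‖b - a‖)]

end GradientInequalities

theorem mul_le_one_of_le_one_div {η c : ℝ} (hη0 : 0 < η) (hη : η ≤ 1 / c) : η * c ≤ 1 := by
  rcases le_or_gt c 0 with hc | hc
  · nlinarith
  · rwa [le_div_iff₀ hc] at hη

section WeightedSums

variable {E ι : Type*} [NormedAddCommGroup E] [InnerProductSpace ℝ E] [Fintype ι]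
  {p : ι → ℝ}

theorem sum_mul_norm_add_sq (hp : ∑ i, p i = 1) (c : ι → E) (m : E) :
    ∑ i, p i * ‖c i + m‖ ^ 2 = ∑ i, p i * ‖c i‖ ^ 2 + 2 * ⟪∑ i, p i • c i, m⟫ + ‖m‖ ^ 2 := by
  simp only [norm_add_sq_real, mul_add, sum_add_distrib, ← sum_mul, hp, one_mul, sum_inner,
    real_inner_smul_left, mul_sum]
  congr 2
  exact sum_congr rfl fun i _ => by ring

theorem sum_mul_norm_sub_smul_sq (hp : ∑ i, p i = 1) (q : E) (η : ℝ) (g : ι → E) :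
    ∑ i, p i * ‖q - η • g i‖ ^ 2 =
      ‖q‖ ^ 2 - 2 * η * ⟪∑ i, p i • g i, q⟫ + η ^ 2 * ∑ i, p i * ‖g i‖ ^ 2 := by
  have h := sum_mul_norm_add_sq hp (fun i => -(η • g i)) q
  simp only [norm_neg, norm_smul, Real.norm_eq_abs, mul_pow, sq_abs, smul_neg, sum_neg_distrib,
    smul_comm (p _) η, ← smul_sum, inner_neg_left, real_inner_smul_left, mul_left_comm (p _),
    ← mul_sum, neg_add_eq_sub] at h
  rw [h]
  ring

end WeightedSums

noncomputable def svrgGrad {d n : ℕ} (f' : Fin n → Euc d → Euc d) (p : Fin n → ℝ)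
    (x w : Euc d) (i : Fin n) : Euc d :=
  (1 / ((n : ℝ) * p i)) • (f' i x - f' i w) + avgG n f' w

section FiniteSum

variable {d n : ℕ} {f : Fin n → Euc d → ℝ} {f' : Fin n → Euc d → Euc d} {L : Fin n → ℝ}
  {p : Fin n → ℝ}

theorem sum_smul_importance_weighted (hp : ∀ i, p i ≠ 0) (x w : Euc d) :
    ∑ i, p i • ((1 / ((n : ℝ) * p i)) • (f' i x - f' i w)) = avgG n f' x - avgG n f' w := by
  have hw : ∀ i, p i * (1 / ((n : ℝ) * p i)) = 1 / n := fun i => by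
    field_simp [hp i]
  simp only [smul_smul, hw, ← smul_sum, avgG, ← smul_sub, sum_sub_distrib]

theorem sum_mul_sq_norm_importance_weighted (hp : ∀ i, p i ≠ 0) (x w : Euc d) :
    ∑ i, p i * ‖(1 / ((n : ℝ) * p i)) • (f' i x - f' i w)‖ ^ 2 = Ve n f' p x w := by
  rw [Ve, mul_sum]
  refine sum_congr rfl fun i _ => ?_
  rw [norm_smul, mul_pow, Real.norm_eq_abs, sq_abs]
  field_simp [hp i]

theorem sum_smul_svrgGrad (hp : ∀ i, p i ≠ 0) (hp1 : ∑ i, p i = 1) (x w : Euc d) :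
    ∑ i, p i • svrgGrad f' p x w i = avgG n f' x := by
  simp only [svrgGrad, smul_add, sum_add_distrib, sum_smul_importance_weighted hp, ← sum_smul,
    hp1, one_smul, sub_add_cancel]

theorem sum_mul_sq_norm_svrgGrad (hp : ∀ i, p i ≠ 0) (hp1 : ∑ i, p i = 1) (x w : Euc d) :
    ∑ i, p i * ‖svrgGrad f' p x w i‖ ^ 2 =
      Ve n f' p x w + ‖avgG n f' x‖ ^ 2 - ‖avgG n f' x - avgG n f' w‖ ^ 2 := by
  have hx : ‖avgG n f' x‖ ^ 2 = ‖avgG n f' x - avgG n f' w‖ ^ 2 +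
      2 * ⟪avgG n f' x - avgG n f' w, avgG n f' w⟫ + ‖avgG n f' w‖ ^ 2 := by
    rw [← norm_add_sq_real, sub_add_cancel]
  simp only [svrgGrad]
  rw [sum_mul_norm_add_sq hp1, sum_mul_sq_norm_importance_weighted hp,
    sum_smul_importance_weighted hp, hx]
  ring

theorem sum_mul_sq_norm_svrg_step (hp : ∀ i, p i ≠ 0) (hp1 : ∑ i, p i = 1) (η : ℝ)
    (x w z : Euc d) :
    ∑ i, p i * ‖x - η • svrgGrad f' p x w i - z‖ ^ 2 =
      ‖x - z‖ ^ 2 - 2 * η * ⟪avgG n f' x, x - z⟫ +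
        η ^ 2 * (Ve n f' p x w + ‖avgG n f' x‖ ^ 2 - ‖avgG n f' x - avgG n f' w‖ ^ 2) := by
  simp only [sub_right_comm x _ z]
  rw [sum_mul_norm_sub_smul_sq hp1, sum_smul_svrgGrad hp hp1,
    sum_mul_sq_norm_svrgGrad hp hp1]

theorem hasGradientAt_avgF (hgrad : ∀ i x, HasGradientAt (f i) (f' i x) x) (x : Euc d) :
    HasGradientAt (avgF n f) (avgG n f' x) x := by
  rw [hasGradientAt_iff_hasFDerivAt, avgG, (InnerProductSpace.toDual ℝ (Euc d)).map_smul, map_sum]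
  exact (HasFDerivAt.fun_sum fun i _ => (hgrad i x).hasFDerivAt).const_smul (1 / (n : ℝ))

theorem avgG_eq_zero_of_forall_le (hgrad : ∀ i x, HasGradientAt (f i) (f' i x) x)
    {xstar : Euc d} (hmin : ∀ y, avgF n f xstar ≤ avgF n f y) : avgG n f' xstar = 0 := by
  have hloc : IsLocalMin (avgF n f) xstar := Filter.Eventually.of_forall hmin
  have h0 := hloc.hasFDerivAt_eq_zero (hasGradientAt_avgF hgrad xstar).hasFDerivAt
  exact (InnerProductSpace.toDual ℝ (Euc d)).injective (by rw [h0, map_zero])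

theorem Lbar_nonneg (hL : ∀ i, 0 ≤ L i) : 0 ≤ Lbar n L :=
  mul_nonneg (by positivity) (sum_nonneg fun i _ => hL i)

theorem Dfun_nonneg (hL : ∀ i, 0 ≤ L i) (z x : Euc d) : 0 ≤ Dfun n f' L z x :=
  mul_nonneg (by positivity)
    (sum_nonneg fun i _ => mul_nonneg (one_div_nonneg.2 (hL i)) (sq_nonneg _))

theorem Dfun_le_two_mul_add (hL : ∀ i, 0 ≤ L i) (x w z : Euc d) :
    Dfun n f' L w x ≤ 2 * (Dfun n f' L z x + Dfun n f' L z w) := by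
  have hterm : ∀ i, 1 / L i * ‖f' i x - f' i w‖ ^ 2 ≤
      2 * (1 / L i * ‖f' i x - f' i z‖ ^ 2 + 1 / L i * ‖f' i w - f' i z‖ ^ 2) := fun i => by
    have hpar := parallelogram_law_with_norm ℝ (f' i x - f' i z) (f' i w - f' i z)
    rw [sub_sub_sub_cancel_right] at hpar
    have hL' := one_div_nonneg.2 (hL i)
    nlinarith [mul_nonneg hL' (sq_nonneg ‖f' i x - f' i z + (f' i w - f' i z)‖)]
  rw [Dfun, Dfun, Dfun, ← mul_add, ← sum_add_distrib, mul_left_comm, mul_sum _ _ (2 : ℝ)]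
  exact mul_le_mul_of_nonneg_left (sum_le_sum fun i _ => hterm i) (by positivity)

theorem Ve_pIS_eq (x w : Euc d) : Ve n f' (pIS n L) x w = Lbar n L * Dfun n f' L w x := by
  simp only [Ve, Dfun, pIS, mul_sum, one_div_div]
  refine sum_congr rfl fun i _ => ?_
  field_simp

theorem Ve_pIS_le (hL : ∀ i, 0 ≤ L i) (x w z : Euc d) :
    Ve n f' (pIS n L) x w ≤ 2 * Lbar n L * (Dfun n f' L z x + Dfun n f' L z w) := by
  rw [Ve_pIS_eq, mul_comm 2, mul_assoc]
  exact mul_le_mul_of_nonneg_left (Dfun_le_two_mul_add hL x w z) (Lbar_nonneg hL)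

theorem Dfun_le_two_mul_bregman (hgrad : ∀ i x, HasGradientAt (f i) (f' i x) x)
    (hconv : ∀ i x y, f i x + ⟪f' i x, y - x⟫ ≤ f i y) (hL : ∀ i, 0 < L i)
    (hsmooth : ∀ i x y, ‖f' i x - f' i y‖ ≤ L i * ‖x - y‖) (x y : Euc d) :
    Dfun n f' L y x ≤ 2 * (avgF n f x - avgF n f y - ⟪avgG n f' y, x - y⟫) := by
  have hterm : ∀ i, 1 / L i * ‖f' i x - f' i y‖ ^ 2 ≤
      2 * (f i x - f i y - ⟪f' i y, x - y⟫) := fun i => by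
    rw [div_mul_eq_mul_div, one_mul, div_le_iff₀ (hL i)]
    linarith [sq_norm_sub_le_of_convex_of_lipschitz_gradient (hL i) (hgrad i) (hconv i)
      (hsmooth i) y x]
  have hlin : avgF n f x - avgF n f y - ⟪avgG n f' y, x - y⟫ =
      1 / n * ∑ i, (f i x - f i y - ⟪f' i y, x - y⟫) := by
    simp only [avgF, avgG, real_inner_smul_left, sum_inner, sum_sub_distrib]
    ring
  rw [Dfun, hlin, mul_left_comm, mul_sum _ _ (2 : ℝ)]
  exact mul_le_mul_of_nonneg_left (sum_le_sum fun i _ => hterm i) (by positivity)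

end FiniteSum

theorem as_lsvrg_one_step_contraction_general (d n : ℕ)
    (f : Fin n → Euc d → ℝ) (f' : Fin n → Euc d → Euc d) (L : Fin n → ℝ) (LF μ : ℝ)
    (hgrad : ∀ i x, HasGradientAt (f i) (f' i x) x)
    (hconv : ∀ i x y, f i x + ⟪f' i x, y - x⟫ ≤ f i y)
    (hLpos : ∀ i, 0 < L i)
    (hsmooth : ∀ i x y, ‖f' i x - f' i y‖ ≤ L i * ‖x - y‖)
    (hLF : ∀ x y, ‖avgG n f' x - avgG n f' y‖ ≤ LF * ‖x - y‖)
    (hμ : 0 < μ)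
    (hsc : ∀ x y : Euc d,
      avgF n f x + ⟪avgG n f' x, y - x⟫ + (μ / 2) * ‖y - x‖ ^ 2 ≤ avgF n f y)
    (xstar : Euc d) (hmin : ∀ y, avgF n f xstar ≤ avgF n f y)
    (ρ η α₁ β : ℝ) (hρ0 : 0 < ρ)
    (hη0 : 0 < η) (hη : η ≤ 1 / (6 * Lbar n L + LF))
    (hα₁ : α₁ = max (1 - η * μ) (1 - ρ / 2))
    (hβ : β = 4 * η ^ 2 * Lbar n L / ρ)
    (p : Fin n → ℝ) (hp : ∀ i, 0 < p i) (hp1 : ∑ i, p i = 1)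
    (x w : Euc d)
    (g : Fin n → Euc d)
    (hg : ∀ i, g i = (1 / ((n : ℝ) * p i)) • (f' i x - f' i w) + avgG n f' w) :
    ∑ i, p i * ‖x - η • g i - xstar‖ ^ 2 +
      β * (ρ * Dfun n f' L xstar x + (1 - ρ) * Dfun n f' L xstar w) ≤
      α₁ * (‖x - xstar‖ ^ 2 + β * Dfun n f' L xstar w) +
      η ^ 2 * (Ve n f' p x w - Ve n f' (pIS n L) x w) := by
  obtain rfl : g = svrgGrad f' p x w := funext hg
  have hL : ∀ i, 0 ≤ L i := fun i => (hLpos i).le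
  have hGstar : avgG n f' xstar = 0 := avgG_eq_zero_of_forall_le hgrad hmin
  set T := avgF n f x - avgF n f xstar
  have hT : 0 ≤ T := sub_nonneg.2 (hmin x)
  have hcross : 2 * T + μ * ‖x - xstar‖ ^ 2 ≤ 2 * ⟪avgG n f' x, x - xstar⟫ := by
    have h := hsc x xstar
    rw [← neg_sub, inner_neg_right, norm_neg] at h
    linarith
  have hGx : ‖avgG n f' x‖ ^ 2 ≤ 2 * LF * T := by
    simpa [hGstar] using sq_norm_sub_le_of_strongConvex_of_lipschitz_gradient hμ
      (hasGradientAt_avgF hgrad) hsc hLF xstar x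
  have hDx : Dfun n f' L xstar x ≤ 2 * T := by
    simpa [hGstar] using Dfun_le_two_mul_bregman hgrad hconv hLpos hsmooth x xstar
  have hβ0 : 0 ≤ β := by have := Lbar_nonneg hL; rw [hβ]; positivity
  have hβρ : β * ρ = 4 * η ^ 2 * Lbar n L := by rw [hβ]; field_simp
  rw [sum_mul_sq_norm_svrg_step (fun i => (hp i).ne') hp1]
  linarith [mul_le_mul_of_nonneg_left hcross hη0.le,
    mul_le_mul_of_nonneg_left hGx (sq_nonneg η),
    mul_le_mul_of_nonneg_left (Ve_pIS_le (f' := f') hL x w xstar) (sq_nonneg η),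
    mul_le_mul_of_nonneg_left hDx (mul_nonneg (sq_nonneg η) (Lbar_nonneg hL)),
    mul_nonneg (mul_nonneg hη0.le hT) (sub_nonneg.2 (mul_le_one_of_le_one_div hη0 hη)),
    mul_nonneg (sub_nonneg.2 (hα₁ ▸ le_max_left _ _ : 1 - η * μ ≤ α₁)) (sq_nonneg ‖x - xstar‖),
    mul_nonneg (sub_nonneg.2 (hα₁ ▸ le_max_right _ _ : 1 - ρ / 2 ≤ α₁))
      (mul_nonneg hβ0 (Dfun_nonneg (f' := f') hL xstar w)),
    mul_nonneg (sq_nonneg η) (sq_nonneg ‖avgG n f' x - avgG n f' w‖),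
    congrArg (· * Dfun n f' L xstar x) hβρ, congrArg (· * Dfun n f' L xstar w) hβρ]

/-- one-step AS-LSVRG contraction under strong convexity. -/
theorem as_lsvrg_one_step_contraction (d n : ℕ) (hd : 0 < d) (hn : 0 < n)
    (f : Fin n → Euc d → ℝ) (f' : Fin n → Euc d → Euc d) (L : Fin n → ℝ) (LF μ : ℝ)
    (hgrad : ∀ i x, HasGradientAt (f i) (f' i x) x)
    (hconv : ∀ i x y, f i x + ⟪f' i x, y - x⟫ ≤ f i y)
    (hLpos : ∀ i, 0 < L i)
    (hsmooth : ∀ i x y, ‖f' i x - f' i y‖ ≤ L i * ‖x - y‖)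
    (hLF : ∀ x y, ‖avgG n f' x - avgG n f' y‖ ≤ LF * ‖x - y‖)
    (hμ : 0 < μ)
    (hsc : ∀ x y : Euc d,
      avgF n f x + ⟪avgG n f' x, y - x⟫ + (μ / 2) * ‖y - x‖ ^ 2 ≤ avgF n f y)
    (xstar : Euc d) (hmin : ∀ y, avgF n f xstar ≤ avgF n f y)
    (ρ η α₁ β : ℝ) (hρ0 : 0 < ρ) (hρ1 : ρ ≤ 1)
    (hη0 : 0 < η) (hη : η ≤ 1 / (6 * Lbar n L + LF))
    (hα₁ : α₁ = max (1 - η * μ) (1 - ρ / 2))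
    (hβ : β = 4 * η ^ 2 * Lbar n L / ρ)
    (p : Fin n → ℝ) (hp : ∀ i, 0 < p i) (hp1 : ∑ i, p i = 1)
    (x w : Euc d)
    (g : Fin n → Euc d)
    (hg : ∀ i, g i = (1 / ((n : ℝ) * p i)) • (f' i x - f' i w) + avgG n f' w) :
    ∑ i, p i * ‖x - η • g i - xstar‖ ^ 2 +
      β * (ρ * Dfun n f' L xstar x + (1 - ρ) * Dfun n f' L xstar w) ≤
      α₁ * (‖x - xstar‖ ^ 2 + β * Dfun n f' L xstar w) +
      η ^ 2 * (Ve n f' p x w - Ve n f' (pIS n L) x w) :=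
  as_lsvrg_one_step_contraction_general d n f f' L LF μ hgrad hconv hLpos hsmooth hLF hμ hsc xstar
    hmin ρ η α₁ β hρ0 hη0 hη hα₁ hβ p hp hp1 x w g hg
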